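/- Fix σ_a ∈ ℝ with 0 < σ_a² < 1, let f(x) = (√(1−x²) + (π − arccos x)·x)/π, let g : [−1,1] → [−1,1] send t to the unique fixed point of x = σ_a²·f(x) + (1−σ_a²)·t, and set ∠* = g(0). Then g is twice differentiable at 0 with g″(0) = σ_a²·(1−σ_a²)²·f″(∠*) / (1 − σ_a²·f′(∠*))³, where f′(x) = (π − arccos x)/π and f″(x) = 1/(π·√(1−x²)). -/

import Mathlib

/-!
The fixed-point equation says exactly that `F (g t) = t` for
`F x = (x - σ² f x) / (1 - σ²)`. Since `0 ≤ f′ ≤ 1`, `F′ = (1 - σ² f′) / (1 - σ²) > 0`, so `F` is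
strictly increasing on `[-1, 1]`, and `F 1 = 1`, `F (-1) ≤ -1` keep `g t` inside `(-1, 1)` for
`t ∈ (-1, 1)`. There `g` is monotone with a neighbourhood as image, hence continuous, and the
inverse function rule gives `g′ t = (1 - σ²) / (1 - σ² f′ (g t))`. One more chain rule at `0`,
using `f′′ = (f′)′`, yields the formula.
-/

open Real Set

/-- The dual kernel of the normalized ReLU activation `φ(x) = √2·max(x,0)`. -/
noncomputable def fDual (x : ℝ) : ℝ :=
  (Real.sqrt (1 - x ^ 2) + (Real.pi - Real.arccos x) * x) / Real.pi

/-- The derivative `f′(x) = (π − arccos x)/π` of the dual kernel. -/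
noncomputable def fDual' (x : ℝ) : ℝ := (Real.pi - Real.arccos x) / Real.pi

/-- The second derivative `f″(x) = 1/(π·√(1−x²))` of the dual kernel. -/
noncomputable def fDual'' (x : ℝ) : ℝ := 1 / (Real.pi * Real.sqrt (1 - x ^ 2))

open Filter Topology

lemma continuousAt_of_strictMonoOn_rightInverse {F G : ℝ → ℝ} {s : Set ℝ} {y : ℝ}
    (hF : StrictMonoOn F s) (hFc : ContinuousAt F (G y)) (hs : s ∈ 𝓝 (G y))
    (hG : ∀ᶠ z in 𝓝 y, G z ∈ s ∧ F (G z) = z) : ContinuousAt G y := by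
  obtain ⟨U, hUG, hUopen, hyU⟩ := mem_nhds_iff.mp hG
  have hmono : MonotoneOn G U := fun z₁ h₁ z₂ h₂ hz => by
    obtain ⟨hs₁, hF₁⟩ := hUG h₁
    obtain ⟨hs₂, hF₂⟩ := hUG h₂
    exact (hF.le_iff_le hs₁ hs₂).mp (by rwa [hF₁, hF₂])
  have hFU : F ⁻¹' U ∈ 𝓝 (G y) :=
    hFc.preimage_mem_nhds (by simpa only [(hUG hyU).2] using hUopen.mem_nhds hyU)
  refine continuousAt_of_monotoneOn_of_image_mem_nhds hmono (hUopen.mem_nhds hyU) ?_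
  filter_upwards [hs, hFU] with x hxs hxU
  obtain ⟨hGs, hFG⟩ := hUG hxU
  exact ⟨F x, hxU, hF.injOn hGs hxs hFG⟩

lemma hasDerivAt_of_strictMonoOn_rightInverse {F G : ℝ → ℝ} {s : Set ℝ} {y f' : ℝ}
    (hF : StrictMonoOn F s) (hs : s ∈ 𝓝 (G y)) (hG : ∀ᶠ z in 𝓝 y, G z ∈ s ∧ F (G z) = z)
    (hF' : HasDerivAt F f' (G y)) (hf' : f' ≠ 0) : HasDerivAt G f'⁻¹ y :=
  hF'.of_local_left_inverse
    (continuousAt_of_strictMonoOn_rightInverse hF hF'.continuousAt hs hG) hf'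
    (hG.mono fun _ hz => hz.2)

lemma fDual_neg_one : fDual (-1) = 0 := by simp [fDual]

lemma fDual_one : fDual 1 = 1 := by simp [fDual, Real.pi_ne_zero]

lemma continuous_fDual : Continuous fDual := by
  unfold fDual
  fun_prop

lemma hasDerivAt_fDual {x : ℝ} (hx : x ∈ Ioo (-1 : ℝ) 1) :
    HasDerivAt fDual (fDual' x) x := by
  have hs : 0 < 1 - x ^ 2 := by nlinarith [hx.1, hx.2]
  have hsqrt : HasDerivAt (fun y => √(1 - y ^ 2)) (-(2 * x) / (2 * √(1 - x ^ 2))) x := by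
    simpa using ((hasDerivAt_pow 2 x).const_sub 1).sqrt hs.ne'
  have harccos := ((hasDerivAt_arccos hx.1.ne' hx.2.ne).const_sub π).mul (hasDerivAt_id x)
  refine ((hsqrt.add harccos).div_const π).congr_deriv ?_
  have : √(1 - x ^ 2) ≠ 0 := (Real.sqrt_pos.2 hs).ne'
  simp only [fDual', id]
  field_simp
  ring

lemma hasDerivAt_fDual' {x : ℝ} (hx : x ∈ Ioo (-1 : ℝ) 1) :
    HasDerivAt fDual' (fDual'' x) x := by
  refine (((hasDerivAt_arccos hx.1.ne' hx.2.ne).const_sub π).div_const π).congr_deriv ?_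
  simp only [fDual'']
  field_simp

lemma fDual'_mem_Icc (x : ℝ) : fDual' x ∈ Icc (0 : ℝ) 1 := by
  have := arccos_nonneg x
  have := arccos_le_pi x
  constructor
  · exact div_nonneg (by linarith) pi_pos.le
  · rw [fDual', div_le_one pi_pos]
    linarith

noncomputable def implicitKernelInv (σa x : ℝ) : ℝ := (x - σa ^ 2 * fDual x) / (1 - σa ^ 2)

lemma implicitKernelInv_eq_iff {σa x t : ℝ} (hσ1 : σa ^ 2 < 1) :
    implicitKernelInv σa x = t ↔ x = σa ^ 2 * fDual x + (1 - σa ^ 2) * t := by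
  have : 1 - σa ^ 2 ≠ 0 := by linarith
  rw [implicitKernelInv, div_eq_iff this]
  constructor <;> intro h <;> linarith

lemma one_sub_mul_fDual'_pos {σa : ℝ} (hσ1 : σa ^ 2 < 1) (x : ℝ) :
    0 < 1 - σa ^ 2 * fDual' x := by
  obtain ⟨h0, h1⟩ := fDual'_mem_Icc x
  nlinarith [sq_nonneg σa]

lemma hasDerivAt_implicitKernelInv (σa : ℝ) {x : ℝ} (hx : x ∈ Ioo (-1 : ℝ) 1) :
    HasDerivAt (implicitKernelInv σa) ((1 - σa ^ 2 * fDual' x) / (1 - σa ^ 2)) x :=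
  ((hasDerivAt_id x).sub ((hasDerivAt_fDual hx).const_mul (σa ^ 2))).div_const _

lemma strictMonoOn_implicitKernelInv {σa : ℝ} (hσ1 : σa ^ 2 < 1) :
    StrictMonoOn (implicitKernelInv σa) (Icc (-1) 1) := by
  refine strictMonoOn_of_hasDerivWithinAt_pos (convex_Icc _ _) ?_
    (fun x hx => (hasDerivAt_implicitKernelInv σa (by rwa [interior_Icc] at hx)).hasDerivWithinAt)
    (fun x _ => div_pos (one_sub_mul_fDual'_pos hσ1 x) (by linarith))
  unfold implicitKernelInv
  exact (continuous_id.sub (continuous_const.mul continuous_fDual)).div_const _ |>.continuousOn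

lemma mem_Ioo_of_implicitKernelInv_mem_Ioo {σa x : ℝ} (hσ1 : σa ^ 2 < 1)
    (hx : x ∈ Icc (-1 : ℝ) 1) (h : implicitKernelInv σa x ∈ Ioo (-1 : ℝ) 1) :
    x ∈ Ioo (-1 : ℝ) 1 := by
  have hc : 0 < 1 - σa ^ 2 := by linarith
  refine ⟨hx.1.lt_of_ne ?_, hx.2.lt_of_ne ?_⟩ <;> rintro rfl <;>
    simp only [implicitKernelInv, fDual_neg_one, fDual_one, mem_Ioo] at h
  · rw [lt_div_iff₀ hc] at h
    nlinarith [sq_nonneg σa]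
  · rw [div_lt_one hc] at h
    linarith

lemma hasDerivAt_of_implicitKernel {σa : ℝ} (hσ1 : σa ^ 2 < 1) {g : ℝ → ℝ}
    (hg : ∀ t ∈ Icc (-1 : ℝ) 1,
      g t ∈ Icc (-1 : ℝ) 1 ∧ g t = σa ^ 2 * fDual (g t) + (1 - σa ^ 2) * t)
    {t : ℝ} (ht : t ∈ Ioo (-1 : ℝ) 1) :
    g t ∈ Ioo (-1 : ℝ) 1 ∧
      HasDerivAt g ((1 - σa ^ 2 * fDual' (g t)) / (1 - σa ^ 2))⁻¹ t := by
  have hinv : ∀ s ∈ Icc (-1 : ℝ) 1, g s ∈ Icc (-1 : ℝ) 1 ∧ implicitKernelInv σa (g s) = s :=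
    fun s hs => ⟨(hg s hs).1, (implicitKernelInv_eq_iff hσ1).2 (hg s hs).2⟩
  have hgt : g t ∈ Ioo (-1 : ℝ) 1 := by
    obtain ⟨hmem, heq⟩ := hinv t (Ioo_subset_Icc_self ht)
    exact mem_Ioo_of_implicitKernelInv_mem_Ioo hσ1 hmem (by rwa [heq])
  refine ⟨hgt, hasDerivAt_of_strictMonoOn_rightInverse (strictMonoOn_implicitKernelInv hσ1)
    (Icc_mem_nhds hgt.1 hgt.2) ?_ (hasDerivAt_implicitKernelInv σa hgt)
    (div_pos (one_sub_mul_fDual'_pos hσ1 _) (by linarith)).ne'⟩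
  filter_upwards [Ioo_mem_nhds ht.1 ht.2] with s hs using hinv s (Ioo_subset_Icc_self hs)

theorem stmt_9_general (σa : ℝ) (hσ1 : σa ^ 2 < 1)
    (g : ℝ → ℝ)
    (hg : ∀ t ∈ Set.Icc (-1 : ℝ) 1,
      g t ∈ Set.Icc (-1 : ℝ) 1 ∧ g t = σa ^ 2 * fDual (g t) + (1 - σa ^ 2) * t) :
    HasDerivAt (deriv g)
      (σa ^ 2 * (1 - σa ^ 2) ^ 2 * fDual'' (g 0) / (1 - σa ^ 2 * fDual' (g 0)) ^ 3)
      0 := by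
  have h0 : (0 : ℝ) ∈ Ioo (-1 : ℝ) 1 := by norm_num
  obtain ⟨hg0, hg'0⟩ := hasDerivAt_of_implicitKernel hσ1 hg h0
  have hderiv : deriv g =ᶠ[𝓝 0] fun t => ((1 - σa ^ 2 * fDual' (g t)) / (1 - σa ^ 2))⁻¹ := by
    filter_upwards [Ioo_mem_nhds h0.1 h0.2] with t ht
    exact (hasDerivAt_of_implicitKernel hσ1 hg ht).2.deriv
  have hc : 1 - σa ^ 2 ≠ 0 := by linarith
  have hA := (one_sub_mul_fDual'_pos hσ1 (g 0)).ne'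
  have hD := ((((hasDerivAt_fDual' hg0).comp 0 hg'0).const_mul (σa ^ 2)).const_sub 1
    |>.div_const (1 - σa ^ 2)).inv (div_ne_zero hA hc)
  refine (hD.congr_of_eventuallyEq hderiv).congr_deriv ?_
  simp only [Function.comp_apply]
  field_simp

theorem stmt_9 (σa : ℝ) (hσ0 : 0 < σa ^ 2) (hσ1 : σa ^ 2 < 1)
    (g : ℝ → ℝ)
    (hg : ∀ t ∈ Set.Icc (-1 : ℝ) 1,
      g t ∈ Set.Icc (-1 : ℝ) 1 ∧ g t = σa ^ 2 * fDual (g t) + (1 - σa ^ 2) * t) :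
    HasDerivAt (deriv g)
      (σa ^ 2 * (1 - σa ^ 2) ^ 2 * fDual'' (g 0) / (1 - σa ^ 2 * fDual' (g 0)) ^ 3)
      0 :=
  stmt_9_general σa hσ1 g hg
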